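/- arXiv:1901.00059 — 2 statements merged into one kernel-verified Lean document; each statement's English description precedes it below -/
import Mathlib

section
/- Let $X \in \mathbb{R}^{n \times m}$ with singular values $\lambda_1 \ge \cdots \ge \lambda_m \ge 0$. For any matrices $W \in \mathbb{R}^{n \times k}$ and $Z \in \mathbb{R}^{m \times k}$ (so that $WZ^T$ has rank at most $k$), it holds that $\|X - WZ^T\|_F^2 \ge \sum_{i=k+1}^m \lambda_i^2$. -/
/-!
Write `W = Q C` with `Q` having orthonormal columns spanning the column space of `W`, so
`Q` has `d ≤ k` columns. For any `B`, Pythagoras gives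
`‖X - Q B‖² = ‖X‖² - ‖Qᵀ X‖² + ‖Qᵀ X - B‖² ≥ ‖X‖² - ‖Qᵀ X‖²`.
With `X = U Σ Vᵀ` this lower bound is `∑ λᵢ² (1 - gᵢ)`, where `gᵢ = ‖Qᵀ uᵢ‖²`. By Bessel's
inequality `0 ≤ gᵢ ≤ 1` and `∑ gᵢ = ‖Uᵀ Q‖² ≤ ‖Q‖² = d ≤ k`, and for such weights the sum
`∑ λᵢ² (1 - gᵢ)` is smallest when `g` is the indicator of the `k` largest singular values.
-/

open Matrix Finset Module

namespace Matrix

variable {R : Type*} {l m n : Type*}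

theorem sum_sum_sq_eq_trace_transpose_mul_self [CommRing R] [Fintype m] [Fintype n]
    (A : Matrix m n R) : ∑ i, ∑ j, A i j ^ 2 = trace (Aᵀ * A) := by
  rw [Finset.sum_comm]
  simp [trace, mul_apply, sq]

theorem diag_transpose_mul_self_nonneg [CommRing R] [LinearOrder R] [IsStrictOrderedRing R]
    [Fintype m] (A : Matrix m n R) (j : n) : 0 ≤ (Aᵀ * A) j j :=
  Finset.sum_nonneg fun i _ => mul_self_nonneg (A i j)

theorem transpose_mul_self_sub_orthonormal_mul [CommRing R] [Fintype l] [DecidableEq l]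
    [Fintype m] {Q : Matrix m l R} (hQ : Qᵀ * Q = 1) (X : Matrix m n R) (B : Matrix l n R) :
    (X - Q * B)ᵀ * (X - Q * B)
      = Xᵀ * X - (Qᵀ * X)ᵀ * (Qᵀ * X) + (Qᵀ * X - B)ᵀ * (Qᵀ * X - B) := by
  simp only [transpose_sub, Matrix.sub_mul, Matrix.mul_sub, transpose_mul, transpose_transpose,
    Matrix.mul_assoc]
  rw [← Matrix.mul_assoc Qᵀ Q B, hQ, Matrix.one_mul]
  abel

section Bessel

variable [CommRing R] [LinearOrder R] [IsStrictOrderedRing R] [Fintype l] [DecidableEq l]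
  [Fintype m] {Q : Matrix m l R}

theorem diag_transpose_mul_orthonormal_le (hQ : Qᵀ * Q = 1) (X : Matrix m n R) (j : n) :
    ((Qᵀ * X)ᵀ * (Qᵀ * X)) j j ≤ (Xᵀ * X) j j := by
  have h := congrFun₂ (transpose_mul_self_sub_orthonormal_mul hQ X (Qᵀ * X)) j j
  simp only [sub_self, transpose_zero, Matrix.zero_mul, add_zero, sub_apply] at h
  linarith [diag_transpose_mul_self_nonneg (X - Q * (Qᵀ * X)) j]

theorem trace_sub_trace_le_trace_transpose_mul_self_sub [Fintype n] (hQ : Qᵀ * Q = 1)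
    (X : Matrix m n R) (B : Matrix l n R) :
    trace (Xᵀ * X) - trace ((Qᵀ * X)ᵀ * (Qᵀ * X)) ≤ trace ((X - Q * B)ᵀ * (X - Q * B)) := by
  rw [transpose_mul_self_sub_orthonormal_mul hQ, trace_add, trace_sub, le_add_iff_nonneg_right]
  exact Finset.sum_nonneg fun j _ => diag_transpose_mul_self_nonneg _ j

end Bessel

theorem trace_transpose_mul_self_mul_diagonal_mul_transpose [CommRing R] [Fintype l]
    [Fintype m] [Fintype n] [DecidableEq n] {V : Matrix l n R} (hV : Vᵀ * V = 1)
    (A : Matrix m n R) (lam : n → R) :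
    trace ((A * diagonal lam * Vᵀ)ᵀ * (A * diagonal lam * Vᵀ))
      = ∑ i, lam i ^ 2 * (Aᵀ * A) i i := by
  have h : (A * diagonal lam * Vᵀ)ᵀ * (A * diagonal lam * Vᵀ)
      = V * (diagonal lam * (Aᵀ * A) * diagonal lam * Vᵀ) := by
    simp only [transpose_mul, transpose_transpose, diagonal_transpose, Matrix.mul_assoc]
  rw [h, trace_mul_comm, Matrix.mul_assoc, hV, Matrix.mul_one]
  simp only [trace, diag, diagonal_mul, mul_diagonal]
  exact Finset.sum_congr rfl fun i _ => by ring

theorem exists_orthonormal_mul_eq [Fintype m] [Fintype n] (W : Matrix m n ℝ) :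
    ∃ (d : ℕ) (Q : Matrix m (Fin d) ℝ) (C : Matrix (Fin d) n ℝ),
      d ≤ Fintype.card n ∧ Qᵀ * Q = 1 ∧ W = Q * C := by
  let col : n → EuclideanSpace ℝ m := fun j => WithLp.toLp 2 (Wᵀ j)
  let S := Submodule.span ℝ (Set.range col)
  let b := stdOrthonormalBasis ℝ S
  let x : n → S := fun j => ⟨col j, Submodule.subset_span ⟨j, rfl⟩⟩
  refine ⟨finrank ℝ S, of fun a t => (b t : EuclideanSpace ℝ m) a, of fun t j => b.repr (x j) t,
    finrank_range_le_card col, ?_, ?_⟩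
  · ext s t
    have h := b.inner_eq_ite s t
    rw [Submodule.coe_inner, PiLp.inner_apply] at h
    simp only [mul_apply, transpose_apply, of_apply, one_apply]
    simpa [mul_comm] using h
  · ext a j
    have h := congrArg (fun v : S => (v : EuclideanSpace ℝ m) a) (b.sum_repr (x j))
    simp only [Submodule.coe_sum, Submodule.coe_smul, WithLp.ofLp_sum, WithLp.ofLp_smul,
      Finset.sum_apply, Pi.smul_apply, smul_eq_mul, x, col, transpose_apply] at h
    rw [← h, mul_apply]
    exact sum_congr rfl fun t _ => mul_comm _ _

end Matrix

theorem sum_filter_le_sum_mul_one_sub_of_antitone {R : Type*} [CommRing R] [LinearOrder R]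
    [IsStrictOrderedRing R] {m : ℕ} (k : ℕ) {μ g : Fin m → R} (hμ : Antitone μ)
    (hμ0 : ∀ i, 0 ≤ μ i) (hg0 : ∀ i, 0 ≤ g i) (hg1 : ∀ i, g i ≤ 1) (hgk : ∑ i, g i ≤ k) :
    ∑ i ∈ univ.filter (fun i : Fin m => k ≤ (i : ℕ)), μ i ≤ ∑ i, μ i * (1 - g i) := by
  obtain ⟨c, hc0, hc_lt, hc_ge⟩ : ∃ c, 0 ≤ c ∧ (∀ i : Fin m, (i : ℕ) < k → c ≤ μ i) ∧
      ∀ i : Fin m, k ≤ (i : ℕ) → μ i ≤ c := by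
    by_cases hkm : k < m
    · exact ⟨μ ⟨k, hkm⟩, hμ0 _, fun i hi => hμ (Fin.mk_le_mk.mpr hi.le),
        fun i hi => hμ (Fin.mk_le_mk.mpr hi)⟩
    · exact ⟨0, le_rfl, fun i _ => hμ0 i, fun i hi => absurd i.isLt (by omega)⟩
  set e : Fin m → R := fun i => if (i : ℕ) < k then 1 else 0
  have hgap : ∑ i, μ i * (1 - g i) - ∑ i ∈ univ.filter (fun i : Fin m => k ≤ (i : ℕ)), μ i
      = ∑ i, (μ i - c) * (e i - g i) + c * (∑ i, e i - ∑ i, g i) := by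
    rw [sum_filter, ← sum_sub_distrib, mul_sub, mul_sum, mul_sum, ← sum_sub_distrib,
      ← sum_add_distrib]
    refine sum_congr rfl fun i _ => ?_
    by_cases hi : (i : ℕ) < k
    · simp only [e, if_pos hi, if_neg (not_le.mpr hi)]; ring
    · simp only [e, if_neg hi, if_pos (not_lt.mp hi)]; ring
  have hterm : ∀ i, 0 ≤ (μ i - c) * (e i - g i) := by
    intro i
    by_cases hi : (i : ℕ) < k
    · simp only [e, if_pos hi]
      exact mul_nonneg (sub_nonneg.mpr (hc_lt i hi)) (sub_nonneg.mpr (hg1 i))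
    · simp only [e, if_neg hi, zero_sub]
      exact mul_nonneg_of_nonpos_of_nonpos (sub_nonpos.mpr (hc_ge i (not_lt.mp hi)))
        (neg_nonpos.mpr (hg0 i))
  have hcount : ∑ i, g i ≤ ∑ i, e i := by
    simp only [e, Finset.sum_boole, Fin.card_filter_val_lt, Nat.cast_min]
    refine le_min ?_ hgk
    simpa using sum_le_sum fun i (_ : i ∈ univ) => hg1 i
  have := Finset.sum_nonneg fun i (_ : i ∈ univ) => hterm i
  nlinarith [mul_nonneg hc0 (sub_nonneg.mpr hcount)]

theorem eckart_young_mirsky_lower_general {n m k : ℕ}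
    (X : Matrix (Fin n) (Fin m) ℝ) (U : Matrix (Fin n) (Fin m) ℝ)
    (V : Matrix (Fin m) (Fin m) ℝ) (lam : Fin m → ℝ)
    (hU : Uᵀ * U = 1) (hV : Vᵀ * V = 1)
    (hlam_nonneg : ∀ i, 0 ≤ lam i)
    (hlam_mono : ∀ i j : Fin m, i ≤ j → lam j ≤ lam i)
    (hX : X = U * Matrix.diagonal lam * Vᵀ)
    (W : Matrix (Fin n) (Fin k) ℝ) (Z : Matrix (Fin m) (Fin k) ℝ) :
    (∑ i ∈ Finset.univ.filter (fun i : Fin m => k ≤ (i : ℕ)), lam i ^ 2)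
      ≤ ∑ i, ∑ j, (X - W * Zᵀ) i j ^ 2 := by
  obtain ⟨d, Q, C, hd, hQ, rfl⟩ := W.exists_orthonormal_mul_eq
  set g : Fin m → ℝ := fun i => ((Qᵀ * U)ᵀ * (Qᵀ * U)) i i
  have hg1 : ∀ i, g i ≤ 1 := fun i =>
    (diag_transpose_mul_orthonormal_le hQ U i).trans (by rw [hU, one_apply_eq])
  have hgk : ∑ i, g i ≤ k :=
    calc ∑ i, g i = trace ((Qᵀ * U)ᵀ * (Qᵀ * U)) := rfl
      _ = trace ((Uᵀ * Q)ᵀ * (Uᵀ * Q)) := by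
          rw [trace_mul_comm]; simp only [transpose_mul, transpose_transpose]
      _ ≤ trace (Qᵀ * Q) := sum_le_sum fun t _ => diag_transpose_mul_orthonormal_le hU Q t
      _ ≤ k := by simpa [hQ] using hd
  have hQX : Qᵀ * X = Qᵀ * U * diagonal lam * Vᵀ := by simp only [hX, Matrix.mul_assoc]
  calc ∑ i ∈ univ.filter (fun i : Fin m => k ≤ (i : ℕ)), lam i ^ 2
      ≤ ∑ i, lam i ^ 2 * (1 - g i) :=
        sum_filter_le_sum_mul_one_sub_of_antitone k
          (fun i j hij => pow_le_pow_left₀ (hlam_nonneg j) (hlam_mono i j hij) 2)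
          (fun i => sq_nonneg _) (fun i => diag_transpose_mul_self_nonneg _ i) hg1 hgk
    _ = trace (Xᵀ * X) - trace ((Qᵀ * X)ᵀ * (Qᵀ * X)) := by
        rw [hQX, hX, trace_transpose_mul_self_mul_diagonal_mul_transpose hV,
          trace_transpose_mul_self_mul_diagonal_mul_transpose hV, hU]
        simp [g, mul_sub, sum_sub_distrib]
    _ ≤ trace ((X - Q * (C * Zᵀ))ᵀ * (X - Q * (C * Zᵀ))) :=
        trace_sub_trace_le_trace_transpose_mul_self_sub hQ X _
    _ = ∑ i, ∑ j, (X - Q * C * Zᵀ) i j ^ 2 := by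
        rw [sum_sum_sq_eq_trace_transpose_mul_self, Matrix.mul_assoc]

/-- Inequality part of Eckart-Young-Mirsky in Frobenius norm: for any rank-`k`
factorization `W Zᵀ`, the squared Frobenius error is at least the sum of the
squares of the last `m - k` singular values of `X`. -/
theorem eckart_young_mirsky_lower {n m k : ℕ} (hk : k ≤ m)
    (X : Matrix (Fin n) (Fin m) ℝ) (U : Matrix (Fin n) (Fin m) ℝ)
    (V : Matrix (Fin m) (Fin m) ℝ) (lam : Fin m → ℝ)
    (hU : Uᵀ * U = 1) (hV : Vᵀ * V = 1)
    (hlam_nonneg : ∀ i, 0 ≤ lam i)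
    (hlam_mono : ∀ i j : Fin m, i ≤ j → lam j ≤ lam i)
    (hX : X = U * Matrix.diagonal lam * Vᵀ)
    (W : Matrix (Fin n) (Fin k) ℝ) (Z : Matrix (Fin m) (Fin k) ℝ) :
    (∑ i ∈ Finset.univ.filter (fun i : Fin m => k ≤ (i : ℕ)), lam i ^ 2)
      ≤ ∑ i, ∑ j, (X - W * Zᵀ) i j ^ 2 :=
  eckart_young_mirsky_lower_general X U V lam hU hV hlam_nonneg hlam_mono hX W Z
end

section
/- Let $V \in \mathbb{R}^{m \times k}$ have orthonormal columns and let $E$ satisfy $\|\epsilon E\|_{op} \le c < 1/2$, and set $V^\epsilon = V + \epsilon E$. Let $x \in \mathbb{R}^m$ and $\hat{w} = (V^{\epsilon T}V^\epsilon)^{-1}V^{\epsilon T}x$ be the least-squares coefficient vector. Then $\|V^\epsilon \hat{w}\|_2 \le \|x\|_2$ and $\|V^\epsilon \hat{w} - V V^T x\|_2 \le \frac{4c}{1 - 2c}\|x\|_2$. -/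
open Matrix

/-- The ℓ²-operator norm of a rectangular real matrix. -/
noncomputable def matOpNorm {m k : ℕ} (A : Matrix (Fin m) (Fin k) ℝ) : ℝ :=
  ‖LinearMap.toContinuousLinearMap (Matrix.toEuclideanLin A)‖

/-- The Euclidean norm of a finitely-indexed real vector. -/
noncomputable def vecNorm {m : ℕ} (x : Fin m → ℝ) : ℝ :=
  Real.sqrt (∑ i, (x i) ^ 2)

/-! The fit `p = Vε ŵ` satisfies the normal equations `Vεᵀ (x - p) = 0`, so `p ⟂ x - p` and
Pythagoras bounds both `‖p‖` and `‖x - p‖` by `‖x‖`. Since `‖V w‖ = ‖w‖`, the perturbed matrix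
is bounded below, `‖Vε w‖ ≥ (1 - c) ‖w‖`; this makes `Vεᵀ Vε` invertible (so `ŵ` is not a junk
value) and gives `‖ŵ‖ ≤ ‖x‖ / (1 - c)`. Writing `p = V ŵ + εE ŵ`, the error splits as
`p - VVᵀx = (I - VVᵀ)(εE ŵ) - V Vᵀ(x - p)`. The first term is at most `c ‖ŵ‖`; in the second,
the normal equations turn `Vᵀ(x - p)` into `-(εE)ᵀ(x - p)`, of norm at most `c ‖x‖`. -/

open scoped Matrix.Norms.L2Operator

section Norms

variable {m k : ℕ}

lemma matOpNorm_eq_norm (A : Matrix (Fin m) (Fin k) ℝ) : matOpNorm A = ‖A‖ := rfl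

lemma matOpNorm_nonneg (A : Matrix (Fin m) (Fin k) ℝ) : 0 ≤ matOpNorm A := norm_nonneg _

lemma matOpNorm_transpose (A : Matrix (Fin m) (Fin k) ℝ) : matOpNorm Aᵀ = matOpNorm A := by
  simpa only [matOpNorm_eq_norm, conjTranspose_eq_transpose_of_trivial] using
    l2_opNorm_conjTranspose A

lemma vecNorm_eq_sqrt_dotProduct (x : Fin m → ℝ) : vecNorm x = √(x ⬝ᵥ x) := by
  simp only [vecNorm, dotProduct, sq]

lemma vecNorm_eq_norm_toLp (x : Fin m → ℝ) : vecNorm x = ‖WithLp.toLp 2 x‖ := by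
  simp [vecNorm, EuclideanSpace.norm_eq]

lemma vecNorm_nonneg (x : Fin m → ℝ) : 0 ≤ vecNorm x := Real.sqrt_nonneg _

lemma vecNorm_neg (x : Fin m → ℝ) : vecNorm (-x) = vecNorm x := by
  simp only [vecNorm_eq_norm_toLp, WithLp.toLp_neg, norm_neg]

lemma vecNorm_sub_le (x y : Fin m → ℝ) : vecNorm (x - y) ≤ vecNorm x + vecNorm y := by
  simpa only [vecNorm_eq_norm_toLp, WithLp.toLp_sub] using norm_sub_le _ _

lemma vecNorm_mulVec_le_of_matOpNorm_le {A : Matrix (Fin m) (Fin k) ℝ} {c : ℝ}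
    (hA : matOpNorm A ≤ c) (w : Fin k → ℝ) : vecNorm (A *ᵥ w) ≤ c * vecNorm w := by
  have h := l2_opNorm_mulVec A (WithLp.toLp 2 w)
  rw [← matOpNorm_eq_norm] at h
  rw [vecNorm_eq_norm_toLp, vecNorm_eq_norm_toLp]
  exact h.trans (mul_le_mul_of_nonneg_right hA (norm_nonneg _))

end Norms

section Projections

variable {m k : ℕ}

lemma vecNorm_le_of_transpose_mulVec_sub_eq_zero (A : Matrix (Fin m) (Fin k) ℝ)
    (w : Fin k → ℝ) (x : Fin m → ℝ) (h : Aᵀ *ᵥ (x - A *ᵥ w) = 0) :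
    vecNorm (A *ᵥ w) ≤ vecNorm x ∧ vecNorm (x - A *ᵥ w) ≤ vecNorm x := by
  set p := A *ᵥ w
  have horth : p ⬝ᵥ (x - p) = 0 := by
    rw [dotProduct_comm, dotProduct_mulVec, ← mulVec_transpose, h, zero_dotProduct]
  have hpyth : x ⬝ᵥ x = p ⬝ᵥ p + (x - p) ⬝ᵥ (x - p) := by
    simp only [sub_dotProduct, dotProduct_sub] at horth ⊢
    rw [dotProduct_comm x p]
    linarith
  have hself : ∀ y : Fin m → ℝ, 0 ≤ y ⬝ᵥ y := fun y => by
    simpa using dotProduct_star_self_nonneg y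
  simp only [vecNorm_eq_sqrt_dotProduct]
  exact ⟨Real.sqrt_le_sqrt (by linarith [hself (x - p)]),
    Real.sqrt_le_sqrt (by linarith [hself p])⟩

variable {V : Matrix (Fin m) (Fin k) ℝ}

lemma vecNorm_mulVec_eq_of_transpose_mul_self_eq_one (hV : Vᵀ * V = 1) (w : Fin k → ℝ) :
    vecNorm (V *ᵥ w) = vecNorm w := by
  rw [vecNorm_eq_sqrt_dotProduct, vecNorm_eq_sqrt_dotProduct, dotProduct_mulVec,
    ← mulVec_transpose, mulVec_mulVec, hV, one_mulVec]

lemma vecNorm_sub_mul_transpose_mulVec_le (hV : Vᵀ * V = 1) (z : Fin m → ℝ) :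
    vecNorm (z - (V * Vᵀ) *ᵥ z) ≤ vecNorm z := by
  rw [← mulVec_mulVec]
  refine (vecNorm_le_of_transpose_mulVec_sub_eq_zero V _ z ?_).2
  rw [mulVec_sub, mulVec_mulVec, hV, one_mulVec, sub_self]

end Projections

theorem transpose_mulVec_leastSquares_residual_eq_zero {m n R : Type*} [Fintype m] [Fintype n]
    [DecidableEq n] [CommRing R] (A : Matrix m n R) (hA : IsUnit (Aᵀ * A).det) (x : m → R) :
    Aᵀ *ᵥ (x - A *ᵥ (((Aᵀ * A)⁻¹ * Aᵀ) *ᵥ x)) = 0 := by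
  rw [mulVec_sub, mulVec_mulVec, mulVec_mulVec, ← Matrix.mul_assoc,
    mul_nonsing_inv _ hA, Matrix.one_mul, sub_self]

section Perturbation

variable {m k : ℕ}

lemma isUnit_det_transpose_mul_self_of_mul_vecNorm_le (A : Matrix (Fin m) (Fin k) ℝ) {δ : ℝ}
    (hδ : 0 < δ) (h : ∀ w, δ * vecNorm w ≤ vecNorm (A *ᵥ w)) : IsUnit (Aᵀ * A).det := by
  have hinj : Function.Injective A.mulVec := fun u v huv => by
    have hzero : vecNorm (u - v) ≤ 0 := by
      have := h (u - v)
      rw [mulVec_sub, huv, sub_self, vecNorm_eq_sqrt_dotProduct 0, dotProduct_zero,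
        Real.sqrt_zero] at this
      nlinarith [vecNorm_nonneg (u - v)]
    rwa [vecNorm_eq_norm_toLp, norm_le_zero_iff, WithLp.toLp_eq_zero, sub_eq_zero] at hzero
  have := (PosDef.conjTranspose_mul_self A hinj).isUnit
  rwa [conjTranspose_eq_transpose_of_trivial, isUnit_iff_isUnit_det] at this

variable {V F : Matrix (Fin m) (Fin k) ℝ} {c : ℝ}

lemma mul_vecNorm_le_vecNorm_add_mulVec (hV : Vᵀ * V = 1) (hF : matOpNorm F ≤ c)
    (w : Fin k → ℝ) : (1 - c) * vecNorm w ≤ vecNorm ((V + F) *ᵥ w) := by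
  have h : vecNorm w ≤ vecNorm ((V + F) *ᵥ w) + c * vecNorm w :=
    calc vecNorm w = vecNorm ((V + F) *ᵥ w - F *ᵥ w) := by
          rw [add_mulVec, add_sub_cancel_right, vecNorm_mulVec_eq_of_transpose_mul_self_eq_one hV]
      _ ≤ vecNorm ((V + F) *ᵥ w) + vecNorm (F *ᵥ w) := vecNorm_sub_le _ _
      _ ≤ vecNorm ((V + F) *ᵥ w) + c * vecNorm w := by
          gcongr; exact vecNorm_mulVec_le_of_matOpNorm_le hF w
  linarith

theorem vecNorm_mulVec_sub_mul_transpose_mulVec_le (hV : Vᵀ * V = 1) (hF : matOpNorm F ≤ c)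
    (w : Fin k → ℝ) (x : Fin m → ℝ) (hres : (V + F)ᵀ *ᵥ (x - (V + F) *ᵥ w) = 0) :
    vecNorm ((V + F) *ᵥ w - (V * Vᵀ) *ᵥ x)
      ≤ c * vecNorm w + c * vecNorm (x - (V + F) *ᵥ w) := by
  set r := x - (V + F) *ᵥ w with hr
  have hVr : Vᵀ *ᵥ r = -(Fᵀ *ᵥ r) := by
    rw [transpose_add, add_mulVec] at hres
    exact eq_neg_of_add_eq_zero_left hres
  have hsplit : (V + F) *ᵥ w - (V * Vᵀ) *ᵥ x
      = (F *ᵥ w - (V * Vᵀ) *ᵥ (F *ᵥ w)) - V *ᵥ (Vᵀ *ᵥ r) := by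
    have hx : x = V *ᵥ w + F *ᵥ w + r := by rw [hr, add_mulVec]; abel
    have hfix : (V * Vᵀ) *ᵥ (V *ᵥ w) = V *ᵥ w := by
      rw [mulVec_mulVec, Matrix.mul_assoc, hV, Matrix.mul_one]
    conv_lhs => rw [hx]
    rw [mulVec_add, mulVec_add, hfix, add_mulVec, ← mulVec_mulVec r V Vᵀ]
    abel
  calc vecNorm ((V + F) *ᵥ w - (V * Vᵀ) *ᵥ x)
      ≤ vecNorm (F *ᵥ w - (V * Vᵀ) *ᵥ (F *ᵥ w)) + vecNorm (V *ᵥ (Vᵀ *ᵥ r)) :=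
        hsplit ▸ vecNorm_sub_le _ _
    _ ≤ vecNorm (F *ᵥ w) + vecNorm (Fᵀ *ᵥ r) := by
        rw [vecNorm_mulVec_eq_of_transpose_mul_self_eq_one hV, hVr, vecNorm_neg]
        gcongr
        exact vecNorm_sub_mul_transpose_mulVec_le hV _
    _ ≤ c * vecNorm w + c * vecNorm r := by
        gcongr
        · exact vecNorm_mulVec_le_of_matOpNorm_le hF w
        · exact vecNorm_mulVec_le_of_matOpNorm_le ((matOpNorm_transpose F).trans_le hF) r

end Perturbation

/-- The least-squares fit with the quantized design matrix `Vᵉ = V + εE` is a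
projection (so does not increase norms) and is close to the projection `V Vᵀ`
onto the original column space. -/
theorem quantized_projection_close {m k : ℕ}
    (V E : Matrix (Fin m) (Fin k) ℝ) (hV : Vᵀ * V = 1)
    (ε c : ℝ) (hc : matOpNorm (ε • E) ≤ c) (hc2 : c < 1 / 2)
    (x : Fin m → ℝ)
    (Vε : Matrix (Fin m) (Fin k) ℝ) (hVε : Vε = V + ε • E)
    (what : Fin k → ℝ) (hwhat : what = ((Vεᵀ * Vε)⁻¹ * Vεᵀ).mulVec x) :
    vecNorm (Vε.mulVec what) ≤ vecNorm x ∧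
    vecNorm (Vε.mulVec what - (V * Vᵀ).mulVec x)
      ≤ 4 * c / (1 - 2 * c) * vecNorm x := by
  subst hVε
  have hc0 : 0 ≤ c := (matOpNorm_nonneg _).trans hc
  have hlow := mul_vecNorm_le_vecNorm_add_mulVec hV hc
  have hres : (V + ε • E)ᵀ *ᵥ (x - (V + ε • E) *ᵥ what) = 0 := by
    rw [hwhat]
    exact transpose_mulVec_leastSquares_residual_eq_zero _
      (isUnit_det_transpose_mul_self_of_mul_vecNorm_le _ (by linarith) hlow) x
  obtain ⟨hfit, hresid⟩ := vecNorm_le_of_transpose_mulVec_sub_eq_zero _ _ _ hres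
  refine ⟨hfit, ?_⟩
  have hcoef : (1 - c) * vecNorm what ≤ vecNorm x := (hlow what).trans hfit
  calc _ ≤ c * vecNorm what + c * vecNorm (x - (V + ε • E) *ᵥ what) :=
        vecNorm_mulVec_sub_mul_transpose_mulVec_le hV hc what x hres
    _ ≤ 4 * c / (1 - 2 * c) * vecNorm x := by
        rw [div_mul_eq_mul_div, le_div_iff₀ (by linarith)]
        nlinarith [mul_le_mul_of_nonneg_left hcoef hc0, mul_le_mul_of_nonneg_left hresid hc0,
          mul_nonneg (mul_nonneg hc0 hc0) (vecNorm_nonneg what),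
          mul_nonneg (mul_nonneg hc0 hc0) (vecNorm_nonneg (x - (V + ε • E) *ᵥ what)),
          mul_nonneg hc0 (vecNorm_nonneg x)]
end
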